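/- arXiv:2006.09903 — 3 statements merged into one kernel-verified Lean document; each statement's English description precedes it below -/
import Mathlib

section
/- For all j_c > 0, γ > 0, the map Λ_γ : ℝ³ → ℝ³ is monotone: (Λ_γ(w₁) − Λ_γ(w₂)) · (w₁ − w₂) ≥ 0 for all w₁, w₂ ∈ ℝ³, where · denotes the Euclidean inner product. -/
open scoped RealInnerProductSpace Topology

/-- Moreau-Yosida regularization of the max-function `x ↦ max{1, x}`. -/
noncomputable def maxReg (γ x : ℝ) : ℝ :=
  if 1 / (2 * γ) ≤ x - 1 then x
  else if x - 1 ≤ -(1 / (2 * γ)) then 1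
  else 1 + γ / 2 * (x - 1 + 1 / (2 * γ)) ^ 2

abbrev E3 := EuclideanSpace ℝ (Fin 3)

/-- The regularized dual-variable map `Λ_γ(e) = j_c γ e / max_γ{1, γ|e|}`. -/
noncomputable def Lam (jc γ : ℝ) (e : E3) : E3 :=
  (jc * γ / maxReg γ (γ * ‖e‖)) • e

/-!
A radial map `e ↦ f ‖e‖ • e` with `f ≥ 0` is monotone as soon as `t ↦ t * f t` is
nondecreasing: by Cauchy–Schwarz the pairing `⟪f ‖x‖ • x - f ‖y‖ • y, x - y⟫` is at least
`(‖x‖ f ‖x‖ - ‖y‖ f ‖y‖) (‖x‖ - ‖y‖) ≥ 0`. For `Λ_γ` this reduces the claim to the monotonicity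
of `x ↦ x / max_γ{1, x}` on `[0, ∞)`, which follows from `x ≤ max_γ{1, x}` and the fact
that the slopes of `max_γ{1, ·}` are at most `1`.
-/

section Radial

variable {E : Type*} [NormedAddCommGroup E] [InnerProductSpace ℝ E]

theorem le_inner_smul_sub_smul {a b : ℝ} (hab : 0 ≤ a + b) (x y : E) :
    (‖x‖ * a - ‖y‖ * b) * (‖x‖ - ‖y‖) ≤ ⟪a • x - b • y, x - y⟫ := by
  have hexpand : ⟪a • x - b • y, x - y⟫ = a * ‖x‖ ^ 2 + b * ‖y‖ ^ 2 - (a + b) * ⟪x, y⟫ := by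
    simp only [inner_sub_left, inner_sub_right, real_inner_smul_left,
      real_inner_self_eq_norm_sq, real_inner_comm x y]
    ring
  rw [hexpand]
  nlinarith [mul_le_mul_of_nonneg_left (real_inner_le_norm x y) hab]

theorem inner_radial_sub_radial_nonneg {f : ℝ → ℝ} (hf : ∀ t, 0 ≤ t → 0 ≤ f t)
    (hmono : MonotoneOn (fun t ↦ t * f t) (Set.Ici 0)) (x y : E) :
    0 ≤ ⟪f ‖x‖ • x - f ‖y‖ • y, x - y⟫ := by
  refine le_trans ?_ (le_inner_smul_sub_smul (add_nonneg (hf _ (norm_nonneg x))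
    (hf _ (norm_nonneg y))) x y)
  have hx : ‖x‖ ∈ Set.Ici (0 : ℝ) := norm_nonneg x
  have hy : ‖y‖ ∈ Set.Ici (0 : ℝ) := norm_nonneg y
  rcases le_total ‖x‖ ‖y‖ with hxy | hyx
  · exact mul_nonneg_of_nonpos_of_nonpos (sub_nonpos.2 (hmono hx hy hxy)) (sub_nonpos.2 hxy)
  · exact mul_nonneg (sub_nonneg.2 (hmono hy hx hyx)) (sub_nonneg.2 hyx)

end Radial

section MaxReg

variable {γ : ℝ}

theorem one_le_maxReg (hγ : 0 < γ) (x : ℝ) : 1 ≤ maxReg γ x := by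
  have hc : 0 < 1 / (2 * γ) := by positivity
  unfold maxReg
  split_ifs <;> nlinarith [sq_nonneg (x - 1 + 1 / (2 * γ))]

theorem le_maxReg (hγ : 0 < γ) (x : ℝ) : x ≤ maxReg γ x := by
  have hγc : γ * (1 / (2 * γ)) = 1 / 2 := by field_simp
  unfold maxReg
  split_ifs <;> nlinarith [sq_nonneg (x - 1 - 1 / (2 * γ))]

theorem maxReg_sub_maxReg_le (hγ : 0 < γ) {x y : ℝ} (hxy : x ≤ y) :
    maxReg γ y - maxReg γ x ≤ y - x := by
  have hc : 0 < 1 / (2 * γ) := by positivity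
  have hγc : γ * (1 / (2 * γ)) = 1 / 2 := by field_simp
  unfold maxReg
  split_ifs <;>
    nlinarith [mul_nonneg (sub_nonneg.2 hxy) hγ.le, sq_nonneg (x - y),
      mul_nonneg (mul_nonneg (sub_nonneg.2 hxy) hγ.le) hc.le]

theorem monotoneOn_div_maxReg (hγ : 0 < γ) : MonotoneOn (fun x ↦ x / maxReg γ x) (Set.Ici 0) := by
  intro x hx y _ hxy
  have hmx := one_le_maxReg hγ x
  have hmy := one_le_maxReg hγ y
  rw [div_le_div_iff₀ (by linarith) (by linarith)]
  calc x * maxReg γ y ≤ x * (maxReg γ x + (y - x)) := by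
        gcongr
        linarith [maxReg_sub_maxReg_le hγ hxy]
    _ ≤ x * maxReg γ x + maxReg γ x * (y - x) := by
        linarith [mul_le_mul_of_nonneg_right (le_maxReg hγ x) (sub_nonneg.2 hxy)]
    _ = y * maxReg γ x := by ring

end MaxReg

/-- Monotonicity of `Λ_γ`: the Euclidean inner product of the increment of `Λ_γ`
with the increment of the argument is nonnegative. -/
theorem Lam_monotone (jc γ : ℝ) (hjc : 0 < jc) (hγ : 0 < γ) (w₁ w₂ : E3) :
    0 ≤ ⟪Lam jc γ w₁ - Lam jc γ w₂, w₁ - w₂⟫ := by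
  have hnonneg : ∀ t : ℝ, 0 ≤ t → 0 ≤ jc * γ / maxReg γ (γ * t) := fun t _ ↦
    div_nonneg (by positivity) (zero_le_one.trans (one_le_maxReg hγ _))
  have hmono : MonotoneOn (fun t ↦ t * (jc * γ / maxReg γ (γ * t))) (Set.Ici 0) := by
    intro s hs t ht hst
    have hdiv := monotoneOn_div_maxReg hγ (mul_nonneg hγ.le hs) (mul_nonneg hγ.le ht)
      (mul_le_mul_of_nonneg_left hst hγ.le)
    calc s * (jc * γ / maxReg γ (γ * s)) = jc * (γ * s / maxReg γ (γ * s)) := by ring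
      _ ≤ jc * (γ * t / maxReg γ (γ * t)) := mul_le_mul_of_nonneg_left hdiv hjc.le
      _ = t * (jc * γ / maxReg γ (γ * t)) := by ring
  exact inner_radial_sub_radial_nonneg hnonneg hmono w₁ w₂
end

section
/- For all j_c > 0 and γ > 0, the map Λ_γ : ℝ³ → ℝ³ is Lipschitz continuous with Lipschitz constant 2 j_c γ, i.e. |Λ_γ(e₁) − Λ_γ(e₂)| ≤ 2 j_c γ |e₁ − e₂| for all e₁, e₂ ∈ ℝ³. -/
open scoped RealInnerProductSpace Topology

/-!
Write `Λ_γ(e) = j_c N(γ e)` with `N(v) = v / m(|v|)` and `m = max_γ{1, ·}`. The regularized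
maximum has slope between `0` and `1` on each of its three pieces, so `m` is `1`-Lipschitz, and it
dominates `max{1, t}`. Splitting `N(v) - N(w) = (v - w)/m(|v|) + (1/m(|v|) - 1/m(|w|)) w`, the first
term is at most `|v - w|` because `m ≥ 1`, and so is the second, because
`|m(|v|) - m(|w|)| ≤ |v - w|`, `m(|v|) ≥ 1` and `|w| ≤ m(|w|)`. Hence `N` is `2`-Lipschitz.
-/

lemma lipschitzWith_one_of_monotone_of_monotone_sub {f : ℝ → ℝ} (hf : Monotone f)
    (hf' : Monotone fun x => x - f x) : LipschitzWith 1 f := by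
  refine LipschitzWith.of_le_add fun x y => ?_
  rw [Real.dist_eq]
  rcases le_total x y with hxy | hyx
  · linarith [hf hxy, abs_nonneg (x - y)]
  · linarith [hf' hyx, le_abs_self (x - y)]

section maxReg

variable {γ : ℝ}

lemma max_one_le_maxReg (hγ : 0 < γ) (x : ℝ) : max 1 x ≤ maxReg γ x := by
  have ha : γ * (1 / (2 * γ)) = 1 / 2 := by field_simp
  unfold maxReg
  split_ifs <;> simp only [max_le_iff] <;> constructor <;>
    nlinarith [sq_nonneg (x - 1 + 1 / (2 * γ)), sq_nonneg (x - 1 - 1 / (2 * γ))]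

lemma maxReg_monotone (hγ : 0 < γ) : Monotone (maxReg γ) := by
  intro x y hxy
  have ha : γ * (1 / (2 * γ)) = 1 / 2 := by field_simp
  unfold maxReg
  split_ifs <;> nlinarith [mul_nonneg (sub_nonneg.2 hxy) hγ.le]

lemma monotone_sub_maxReg (hγ : 0 < γ) : Monotone fun x => x - maxReg γ x := by
  intro x y hxy
  have ha : γ * (1 / (2 * γ)) = 1 / 2 := by field_simp
  dsimp only
  unfold maxReg
  split_ifs <;> nlinarith [mul_nonneg (sub_nonneg.2 hxy) hγ.le]

end maxReg

lemma lipschitzWith_two_inv_smul_self {E : Type*} [SeminormedAddCommGroup E] [NormedSpace ℝ E]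
    {m : ℝ → ℝ} (hm : LipschitzWith 1 m) (hm_ge : ∀ t, max 1 t ≤ m t) :
    LipschitzWith 2 fun v : E => (m ‖v‖)⁻¹ • v := by
  refine LipschitzWith.of_dist_le_mul fun v w => ?_
  simp only [dist_eq_norm, NNReal.coe_ofNat]
  obtain ⟨hv₁, -⟩ := max_le_iff.1 (hm_ge ‖v‖)
  obtain ⟨hw₁, hw⟩ := max_le_iff.1 (hm_ge ‖w‖)
  set a := m ‖v‖
  set b := m ‖w‖
  have ha : 0 < a := by linarith
  have hb : 0 < b := by linarith
  have hab : |a - b| ≤ ‖v - w‖ := by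
    have := hm.dist_le_mul ‖v‖ ‖w‖
    rw [NNReal.coe_one, one_mul, Real.dist_eq, Real.dist_eq] at this
    exact this.trans (abs_norm_sub_norm_le v w)
  have ha_inv : a⁻¹ ≤ 1 := inv_le_one_of_one_le₀ hv₁
  have hwb : ‖w‖ / b ≤ 1 := (div_le_one hb).2 hw
  have hsplit : a⁻¹ • v - b⁻¹ • w = a⁻¹ • (v - w) + (a⁻¹ - b⁻¹) • w := by
    rw [smul_sub, sub_smul]; abel
  have hcoeff : |a⁻¹ - b⁻¹| * ‖w‖ = |a - b| * a⁻¹ * (‖w‖ / b) := by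
    rw [inv_sub_inv ha.ne' hb.ne', abs_div, abs_sub_comm, abs_of_pos (mul_pos ha hb)]
    field_simp
  calc ‖a⁻¹ • v - b⁻¹ • w‖
      ≤ ‖a⁻¹ • (v - w)‖ + ‖(a⁻¹ - b⁻¹) • w‖ := hsplit ▸ norm_add_le _ _
    _ = a⁻¹ * ‖v - w‖ + |a⁻¹ - b⁻¹| * ‖w‖ := by
        rw [norm_smul, norm_smul, Real.norm_of_nonneg (inv_nonneg.2 ha.le), Real.norm_eq_abs]
    _ ≤ ‖v - w‖ * 1 + ‖v - w‖ * 1 * 1 := by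
        rw [hcoeff, mul_comm a⁻¹]
        gcongr
    _ = 2 * ‖v - w‖ := by ring

lemma Lam_eq_smul_inv_smul (jc : ℝ) {γ : ℝ} (hγ : 0 < γ) (e : E3) :
    Lam jc γ e = jc • (maxReg γ ‖γ • e‖)⁻¹ • (γ • e) := by
  rw [Lam, norm_smul, Real.norm_of_nonneg hγ.le, smul_smul, smul_smul, div_eq_mul_inv]
  ring_nf

/-- `Λ_γ` is Lipschitz continuous with constant `2 j_c γ`. -/
theorem Lam_lipschitz (jc γ : ℝ) (hjc : 0 < jc) (hγ : 0 < γ) (e₁ e₂ : E3) :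
    ‖Lam jc γ e₁ - Lam jc γ e₂‖ ≤ 2 * jc * γ * ‖e₁ - e₂‖ := by
  have hmaxReg : LipschitzWith 1 (maxReg γ) :=
    lipschitzWith_one_of_monotone_of_monotone_sub (maxReg_monotone hγ) (monotone_sub_maxReg hγ)
  have hnormalize := lipschitzWith_two_inv_smul_self (E := E3) hmaxReg (max_one_le_maxReg hγ)
  rw [Lam_eq_smul_inv_smul jc hγ, Lam_eq_smul_inv_smul jc hγ, ← smul_sub, norm_smul,
    Real.norm_of_nonneg hjc.le]
  calc jc * ‖(maxReg γ ‖γ • e₁‖)⁻¹ • (γ • e₁) - (maxReg γ ‖γ • e₂‖)⁻¹ • (γ • e₂)‖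
      ≤ jc * (2 * ‖γ • e₁ - γ • e₂‖) := by
        gcongr
        exact hnormalize.norm_sub_le _ _
    _ = 2 * jc * γ * ‖e₁ - e₂‖ := by
        rw [← smul_sub, norm_smul, Real.norm_of_nonneg hγ.le]
        ring
end

section
/- For all j_c > 0, γ > 0, and every e ∈ ℝ³ with e ≠ 0, the map Λ_γ : ℝ³ → ℝ³ is Fréchet differentiable at e, with derivative given by Λ_γ'(e)w = j_c γ w / max_γ{1, γ|e|} − γ c_γ(e) (e·w) Λ_γ(e) / (max_γ{1, γ|e|} |e|) for every direction w ∈ ℝ³. -/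
/-
Write `Λ_γ(v) = φ(‖v‖) • v` with `φ(t) = j_c γ / max_γ{1, γ t}`. The regularized maximum is
differentiable everywhere with derivative `c_γ`: its three branches (the constant `1`, the
parabola, the identity) agree to first order at the break points `1 ± 1/(2γ)`, where the parabola
has slope `0` and `1`. Away from `0` the norm has gradient `e / ‖e‖`, so the chain and product
rules give `Λ_γ'(e) w = φ(‖e‖) w + φ'(‖e‖) ⟪e, w⟫ e / ‖e‖`, which rearranges to the stated formula.
-/

open scoped RealInnerProductSpace Topology

/-- The coefficient `c_γ(e)` arising in the derivative of `Λ_γ`. -/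
noncomputable def cReg (γ : ℝ) (e : E3) : ℝ :=
  if 1 + 1 / (2 * γ) ≤ γ * ‖e‖ then 1
  else if |γ * ‖e‖ - 1| < 1 / (2 * γ) then γ * (γ * ‖e‖ - 1 + 1 / (2 * γ))
  else 0

open Set

noncomputable def maxRegDeriv (γ x : ℝ) : ℝ :=
  if 1 + 1 / (2 * γ) ≤ x then 1
  else if |x - 1| < 1 / (2 * γ) then γ * (x - 1 + 1 / (2 * γ))
  else 0

theorem cReg_eq_maxRegDeriv (γ : ℝ) (e : E3) : cReg γ e = maxRegDeriv γ (γ * ‖e‖) := rfl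

theorem IsClosed.hasDerivWithinAt_of_eqOn {f g : ℝ → ℝ} {s : Set ℝ} {x d : ℝ} (hs : IsClosed s)
    (hfg : EqOn f g s) (hg : x ∈ s → HasDerivAt g d x) : HasDerivWithinAt f d s x := by
  by_cases hx : x ∈ s
  · exact (hg hx).hasDerivWithinAt.congr hfg (hfg hx)
  · rw [← hasDerivWithinAt_inter (hs.isOpen_compl.mem_nhds hx), inter_compl_self,
      hasDerivWithinAt_iff_hasFDerivWithinAt]
    exact .empty

section maxReg

variable {γ : ℝ}

theorem maxReg_pos (hγ : 0 < γ) (x : ℝ) : 0 < maxReg γ x := by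
  have hδ : 0 < 1 / (2 * γ) := by positivity
  unfold maxReg
  split_ifs
  · linarith
  · exact one_pos
  · positivity

theorem maxReg_of_le (hγ : 0 < γ) {x : ℝ} (hx : x ≤ 1 - 1 / (2 * γ)) : maxReg γ x = 1 := by
  have hδ : 0 < 1 / (2 * γ) := by positivity
  rw [maxReg, if_neg (by linarith), if_pos (by linarith)]

theorem maxReg_of_ge {x : ℝ} (hx : 1 + 1 / (2 * γ) ≤ x) : maxReg γ x = x := by
  rw [maxReg, if_pos (by linarith)]

theorem maxReg_of_mem_Icc (hγ : 0 < γ) {x : ℝ}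
    (hx : x ∈ Icc (1 - 1 / (2 * γ)) (1 + 1 / (2 * γ))) :
    maxReg γ x = 1 + γ / 2 * (x - 1 + 1 / (2 * γ)) ^ 2 := by
  obtain ⟨hlo, hhi⟩ := hx
  rcases hhi.eq_or_lt with rfl | hhi
  · rw [maxReg_of_ge le_rfl]
    field_simp
    ring
  · unfold maxReg
    rw [if_neg (by linarith)]
    split_ifs
    · rw [show x = 1 - 1 / (2 * γ) by linarith]
      ring
    · rfl

theorem maxRegDeriv_of_le (hγ : 0 < γ) {x : ℝ} (hx : x ≤ 1 - 1 / (2 * γ)) :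
    maxRegDeriv γ x = 0 := by
  have hδ : 0 < 1 / (2 * γ) := by positivity
  rw [maxRegDeriv, if_neg (by linarith), if_neg (by rw [abs_lt]; intro h; linarith)]

theorem maxRegDeriv_of_ge {x : ℝ} (hx : 1 + 1 / (2 * γ) ≤ x) : maxRegDeriv γ x = 1 := by
  rw [maxRegDeriv, if_pos hx]

theorem maxRegDeriv_of_mem_Icc (hγ : 0 < γ) {x : ℝ}
    (hx : x ∈ Icc (1 - 1 / (2 * γ)) (1 + 1 / (2 * γ))) :
    maxRegDeriv γ x = γ * (x - 1 + 1 / (2 * γ)) := by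
  obtain ⟨hlo, hhi⟩ := hx
  rcases hhi.eq_or_lt with rfl | hhi
  · rw [maxRegDeriv_of_ge le_rfl]
    field_simp
    ring
  rcases hlo.eq_or_lt with rfl | hlo
  · rw [maxRegDeriv_of_le hγ le_rfl]
    ring
  rw [maxRegDeriv, if_neg (by linarith), if_pos (by rw [abs_lt]; constructor <;> linarith)]

theorem hasDerivAt_maxReg (hγ : 0 < γ) (x : ℝ) : HasDerivAt (maxReg γ) (maxRegDeriv γ x) x := by
  have hcover : Iic (1 - 1 / (2 * γ)) ∪ Icc (1 - 1 / (2 * γ)) (1 + 1 / (2 * γ)) ∪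
      Ici (1 + 1 / (2 * γ)) = univ := by
    refine eq_univ_of_forall fun y ↦ ?_
    rcases le_total y (1 - 1 / (2 * γ)) with hlo | hlo
    · exact .inl (.inl hlo)
    rcases le_total y (1 + 1 / (2 * γ)) with hhi | hhi
    · exact .inl (.inr ⟨hlo, hhi⟩)
    · exact .inr hhi
  rw [← hasDerivWithinAt_univ, ← hcover]
  refine ((isClosed_Iic.hasDerivWithinAt_of_eqOn (fun y hy ↦ maxReg_of_le hγ hy) fun hx ↦ ?_).union
    (isClosed_Icc.hasDerivWithinAt_of_eqOn (fun y hy ↦ maxReg_of_mem_Icc hγ hy) fun hx ↦ ?_)).union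
    (isClosed_Ici.hasDerivWithinAt_of_eqOn (fun y hy ↦ maxReg_of_ge hy) fun hx ↦ ?_)
  · rw [maxRegDeriv_of_le hγ hx]
    exact hasDerivAt_const x 1
  · rw [maxRegDeriv_of_mem_Icc hγ hx]
    have := (((hasDerivAt_id x).sub_const 1).add_const (1 / (2 * γ))).pow 2
      |>.const_mul (γ / 2) |>.const_add 1
    refine this.congr_deriv ?_
    simp only [id_eq, Nat.cast_ofNat, Nat.add_one_sub_one, pow_one]
    ring
  · rw [maxRegDeriv_of_ge hx]
    exact hasDerivAt_id x

end maxReg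

section radial

variable {E : Type*} [NormedAddCommGroup E] [InnerProductSpace ℝ E]

theorem hasFDerivAt_norm {e : E} (he : e ≠ 0) :
    HasFDerivAt (‖·‖) (‖e‖⁻¹ • innerSL ℝ e) e := by
  have hsq : ‖e‖ ^ 2 ≠ 0 := pow_ne_zero 2 (norm_ne_zero_iff.mpr he)
  have hsqrt : (‖·‖ : E → ℝ) = Real.sqrt ∘ fun v ↦ ‖v‖ ^ 2 :=
    funext fun v ↦ by simp [Real.sqrt_sq (norm_nonneg v)]
  rw [hsqrt]
  refine ((Real.hasDerivAt_sqrt hsq).comp_hasFDerivAt e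
    (hasStrictFDerivAt_norm_sq e).hasFDerivAt).congr_fderiv ?_
  rw [Real.sqrt_sq (norm_nonneg e)]
  ext w
  simp only [smul_apply, coe_innerSL_apply, nsmul_eq_mul, Nat.cast_ofNat, smul_eq_mul]
  field_simp

theorem HasDerivAt.hasFDerivAt_comp_norm_smul {φ : ℝ → ℝ} {φ' : ℝ} {e : E}
    (hφ : HasDerivAt φ φ' ‖e‖) (he : e ≠ 0) :
    HasFDerivAt (fun v ↦ φ ‖v‖ • v)
      (φ ‖e‖ • ContinuousLinearMap.id ℝ E + (φ' / ‖e‖) • (innerSL ℝ e).smulRight e) e := by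
  refine ((hφ.comp_hasFDerivAt e (hasFDerivAt_norm he)).smul (hasFDerivAt_id e)).congr_fderiv ?_
  ext w
  simp only [add_apply, smul_apply, ContinuousLinearMap.smulRight_apply, innerSL_apply_apply,
    Function.comp_apply, id_eq, smul_smul, smul_eq_mul, div_eq_mul_inv]

end radial

theorem Lam_fderiv_general (jc γ : ℝ) (hγ : 0 < γ) (e : E3) (he : e ≠ 0) :
    DifferentiableAt ℝ (Lam jc γ) e ∧
    ∀ w : E3,
      fderiv ℝ (Lam jc γ) e w =
        (jc * γ / maxReg γ (γ * ‖e‖)) • w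
          - (γ * cReg γ e * ⟪e, w⟫ / (maxReg γ (γ * ‖e‖) * ‖e‖)) • Lam jc γ e := by
  have hM : maxReg γ (γ * ‖e‖) ≠ 0 := (maxReg_pos hγ _).ne'
  have hφ : HasDerivAt (fun t ↦ jc * γ / maxReg γ (γ * t))
      (-(jc * γ * (γ * maxRegDeriv γ (γ * ‖e‖))) / maxReg γ (γ * ‖e‖) ^ 2) ‖e‖ :=
    ((hasDerivAt_const _ _).div
      ((hasDerivAt_maxReg hγ _).comp _ ((hasDerivAt_id' _).const_mul γ)) hM).congr_deriv
      (by simp only [Function.comp_apply]; ring)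
  have hLam : HasFDerivAt (Lam jc γ) _ e := hφ.hasFDerivAt_comp_norm_smul he
  refine ⟨hLam.differentiableAt, fun w ↦ ?_⟩
  rw [hLam.fderiv, cReg_eq_maxRegDeriv]
  simp only [Lam, add_apply, smul_apply, ContinuousLinearMap.id_apply,
    ContinuousLinearMap.smulRight_apply, innerSL_apply_apply, smul_smul, sub_eq_add_neg,
    ← neg_smul]
  congr 2
  field_simp

/-- For e ≠ 0, `Λ_γ` is Fréchet differentiable at e with derivative
`w ↦ j_c γ w / max_γ{1, γ‖e‖} - γ c_γ(e) ⟪e, w⟫ Λ_γ(e) / (max_γ{1, γ‖e‖} ‖e‖)`. -/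
theorem Lam_fderiv (jc γ : ℝ) (hjc : 0 < jc) (hγ : 0 < γ) (e : E3) (he : e ≠ 0) :
    DifferentiableAt ℝ (Lam jc γ) e ∧
    ∀ w : E3,
      fderiv ℝ (Lam jc γ) e w =
        (jc * γ / maxReg γ (γ * ‖e‖)) • w
          - (γ * cReg γ e * ⟪e, w⟫ / (maxReg γ (γ * ‖e‖) * ‖e‖)) • Lam jc γ e :=
  Lam_fderiv_general jc γ hγ e he
end
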